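/- Let A be the n×n parametric block correlation matrix with diagonal blocks A_{k,k} = I_{n_k} + b_k(J_{n_k} − I_{n_k}) and constant off-diagonal blocks A_{k,ℓ} = c_{k,ℓ}·J_{n_k×n_ℓ}, with all parameters b_k, c_{k,ℓ} in (−1,1). Then A is positive definite if and only if the p×p block average matrix φ(A), whose diagonal entries are α_k = (1 + (n_k−1)b_k)/n_k and off-diagonal entries are c_{k,ℓ}, is positive definite. -/

import Mathlib

/-!
Let `L` be the block-indicator matrix, so that `L x` is the vector of block sums of `x`, and put
`w k = 1 - b k`. Entrywise one checks `A = D + Lᵀ φ(A) L`, where `D` is the matrix of the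
quadratic form `x ↦ ∑ₖ w k ∑ᵢ (x k i - x̄ k)²` (within-block variance, `x̄ k` the block mean).
Since `w > 0`, `D` is positive semidefinite, positive on the nonzero vectors with vanishing block
sums, and zero on the block-constant vectors, which `L` maps onto `ℝᵖ`. Hence
`xᵀ A x = xᵀ D x + (L x)ᵀ φ(A) (L x)` is positive for all `x ≠ 0` iff `φ(A)` is positive definite.
-/

open Matrix Finset

lemma sq_sum_div_card_le_sum_sq {α : Type*} [Fintype α] (f : α → ℝ) :
    (∑ i, f i) ^ 2 / Fintype.card α ≤ ∑ i, f i ^ 2 :=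
  div_le_of_le_mul₀ (Nat.cast_nonneg _) (sum_nonneg fun i _ => sq_nonneg _)
    (by rw [mul_comm]; simpa using sq_sum_le_card_mul_sum_sq (s := univ) (f := f))

namespace Matrix

section Congruence

variable {m ι R : Type*} [Fintype m] [Fintype ι] [Ring R] [StarRing R]

lemma star_dotProduct_conjTranspose_mul_mul_mulVec (L : Matrix ι m R) (Φ : Matrix ι ι R)
    (x : m → R) : star x ⬝ᵥ (Lᴴ * Φ * L) *ᵥ x = star (L *ᵥ x) ⬝ᵥ Φ *ᵥ (L *ᵥ x) := by
  simp only [star_mulVec, dotProduct_mulVec, vecMul_vecMul, ← mulVec_mulVec]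

theorem posDef_add_conjTranspose_mul_mul_iff [PartialOrder R] [IsOrderedAddMonoid R]
    {D : Matrix m m R} {L : Matrix ι m R} {Φ : Matrix ι ι R} (hD : D.PosSemidef)
    (hD_ker : ∀ x ≠ 0, L *ᵥ x = 0 → 0 < star x ⬝ᵥ D *ᵥ x)
    (hL : ∀ v, ∃ x, L *ᵥ x = v ∧ star x ⬝ᵥ D *ᵥ x = 0) (hΦ : Φ.IsHermitian) :
    (D + Lᴴ * Φ * L).PosDef ↔ Φ.PosDef := by
  have hquad (x : m → R) : star x ⬝ᵥ (D + Lᴴ * Φ * L) *ᵥ x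
      = star x ⬝ᵥ D *ᵥ x + star (L *ᵥ x) ⬝ᵥ Φ *ᵥ (L *ᵥ x) := by
    rw [add_mulVec, dotProduct_add, star_dotProduct_conjTranspose_mul_mul_mulVec]
  constructor
  · refine fun hA => .of_dotProduct_mulVec_pos hΦ fun v hv => ?_
    obtain ⟨x, rfl, hx⟩ := hL v
    have hx0 : x ≠ 0 := by rintro rfl; simp at hv
    simpa [hquad, hx] using hA.dotProduct_mulVec_pos hx0
  · refine fun hΦpos => .of_dotProduct_mulVec_pos
      (hD.isHermitian.add (isHermitian_conjTranspose_mul_mul L hΦ)) fun x hx => ?_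
    rw [hquad]
    by_cases hLx : L *ᵥ x = 0
    · simpa [hLx] using hD_ker x hx hLx
    · exact add_pos_of_nonneg_of_pos (hD.dotProduct_mulVec_nonneg x)
        (hΦpos.dotProduct_mulVec_pos hLx)

end Congruence

section Blocks

variable {ι : Type*} [Fintype ι] [DecidableEq ι] {β : ι → Type*}

def blockIndicator (β : ι → Type*) : Matrix ι (Σ k, β k) ℝ :=
  of fun k a => if a.1 = k then 1 else 0

lemma blockIndicator_conjTranspose_mul_mul_apply (M : Matrix ι ι ℝ) (a a' : Σ k, β k) :
    ((blockIndicator β)ᴴ * M * blockIndicator β) a a' = M a.1 a'.1 := by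
  simp [blockIndicator, mul_apply]

variable [∀ k, Fintype (β k)]

lemma blockIndicator_mulVec (x : (Σ k, β k) → ℝ) :
    blockIndicator β *ᵥ x = fun k => ∑ i, x ⟨k, i⟩ := by
  ext k
  simp only [blockIndicator, mulVec, dotProduct, of_apply, ite_mul, one_mul, zero_mul,
    Fintype.sum_sigma]
  rw [Fintype.sum_eq_single k fun l hl => by simp [hl]]
  simp

variable [∀ k, DecidableEq (β k)]

noncomputable def blockCentering (β : ι → Type*) [∀ k, Fintype (β k)] [∀ k, DecidableEq (β k)]
    (w : ι → ℝ) : Matrix (Σ k, β k) (Σ k, β k) ℝ :=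
  diagonal (fun a => w a.1) -
    (blockIndicator β)ᴴ * diagonal (fun k => w k / Fintype.card (β k)) * blockIndicator β

lemma star_dotProduct_blockCentering_mulVec (w : ι → ℝ) (x : (Σ k, β k) → ℝ) :
    star x ⬝ᵥ blockCentering β w *ᵥ x =
      ∑ k, w k * (∑ i, x ⟨k, i⟩ ^ 2 - (∑ i, x ⟨k, i⟩) ^ 2 / Fintype.card (β k)) := by
  rw [blockCentering, sub_mulVec, dotProduct_sub, star_dotProduct_conjTranspose_mul_mul_mulVec,
    blockIndicator_mulVec]
  simp only [star_trivial, dotProduct, mulVec_diagonal, Fintype.sum_sigma, mul_sub,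
    sum_sub_distrib]
  congr 1 <;> refine sum_congr rfl fun k _ => ?_
  · rw [mul_sum]
    exact sum_congr rfl fun i _ => by ring
  · ring

lemma posSemidef_blockCentering {w : ι → ℝ} (hw : 0 ≤ w) : (blockCentering β w).PosSemidef := by
  refine .of_dotProduct_mulVec_nonneg ((isHermitian_diagonal _).sub
    (isHermitian_conjTranspose_mul_mul _ (isHermitian_diagonal _))) fun x => ?_
  rw [star_dotProduct_blockCentering_mulVec]
  exact sum_nonneg fun k _ => mul_nonneg (hw k) (sub_nonneg.2 (sq_sum_div_card_le_sum_sq _))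

lemma star_dotProduct_blockCentering_mulVec_pos {w : ι → ℝ} (hw : ∀ k, 0 < w k)
    {x : (Σ k, β k) → ℝ} (hx : x ≠ 0) (hLx : blockIndicator β *ᵥ x = 0) :
    0 < star x ⬝ᵥ blockCentering β w *ᵥ x := by
  have hS (k : ι) : ∑ i, x ⟨k, i⟩ = 0 := by
    simpa [blockIndicator_mulVec] using congrFun hLx k
  obtain ⟨⟨k, i⟩, hki⟩ := Function.ne_iff.1 hx
  rw [star_dotProduct_blockCentering_mulVec]
  simp only [hS, zero_pow two_ne_zero, zero_div, sub_zero]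
  exact sum_pos' (fun l _ => mul_nonneg (hw l).le (sum_nonneg fun j _ => sq_nonneg _))
    ⟨k, mem_univ _, mul_pos (hw k) (sum_pos' (fun j _ => sq_nonneg _)
      ⟨i, mem_univ _, sq_pos_of_ne_zero hki⟩)⟩

lemma exists_blockIndicator_mulVec_eq [∀ k, Nonempty (β k)] (w : ι → ℝ) (v : ι → ℝ) :
    ∃ x, blockIndicator β *ᵥ x = v ∧ star x ⬝ᵥ blockCentering β w *ᵥ x = 0 := by
  have hN (k : ι) : (Fintype.card (β k) : ℝ) ≠ 0 := Nat.cast_ne_zero.2 Fintype.card_ne_zero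
  refine ⟨fun a => v a.1 / Fintype.card (β a.1), ?_, ?_⟩
  · ext k
    rw [blockIndicator_mulVec]
    show ∑ _i : β k, v k / (Fintype.card (β k) : ℝ) = v k
    rw [sum_const, card_univ, nsmul_eq_mul, mul_div_cancel₀ _ (hN k)]
  · rw [star_dotProduct_blockCentering_mulVec]
    refine sum_eq_zero fun k _ => ?_
    show w k * (∑ _i : β k, (v k / (Fintype.card (β k) : ℝ)) ^ 2 -
      (∑ _i : β k, v k / (Fintype.card (β k) : ℝ)) ^ 2 / Fintype.card (β k)) = 0
    simp only [sum_const, card_univ, nsmul_eq_mul]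
    field_simp
    ring

end Blocks

end Matrix

open Matrix in
theorem blockClass_posDef_iff_average_general (p : ℕ) (n : Fin p → ℕ) (hn : ∀ k, 0 < n k)
    (b : Fin p → ℝ) (hb : ∀ k, -1 < b k ∧ b k < 1)
    (c : Fin p → Fin p → ℝ) (hcsymm : ∀ k l, c k l = c l k)
    (A : Matrix ((k : Fin p) × Fin (n k)) ((k : Fin p) × Fin (n k)) ℝ)
    (hA : ∀ x y : (k : Fin p) × Fin (n k),
      A x y = if x = y then 1 else if x.1 = y.1 then b x.1 else c x.1 y.1) :
    A.PosDef ↔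
      (Matrix.of (fun k l : Fin p =>
        if k = l then (1 + ((n k : ℝ) - 1) * b k) / (n k : ℝ) else c k l)).PosDef := by
  set Φ := Matrix.of (fun k l : Fin p =>
    if k = l then (1 + ((n k : ℝ) - 1) * b k) / (n k : ℝ) else c k l)
  have : ∀ k, Nonempty (Fin (n k)) := fun k => ⟨⟨0, hn k⟩⟩
  have hw (k : Fin p) : 0 < 1 - b k := sub_pos.2 (hb k).2
  have hΦ : Φ.IsHermitian := .ext fun k l => by
    obtain rfl | h := eq_or_ne l k
    · simp [Φ]
    · simp [Φ, h, h.symm, hcsymm l k]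
  have hAΦ : A = blockCentering (fun k => Fin (n k)) (1 - b) +
      (blockIndicator fun k : Fin p => Fin (n k))ᴴ * Φ * blockIndicator fun k => Fin (n k) := by
    ext a a'
    have hnk : (n a.1 : ℝ) ≠ 0 := Nat.cast_ne_zero.2 (hn a.1).ne'
    simp only [hA, blockCentering, Matrix.add_apply, Matrix.sub_apply, Pi.sub_apply,
      Pi.one_apply, diagonal_apply, blockIndicator_conjTranspose_mul_mul_apply, Φ, of_apply,
      Fintype.card_fin]
    split_ifs with h1 h2
    · field_simp
      ring
    · exact absurd (congrArg Sigma.fst h1) h2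
    · field_simp
      ring
    · ring
  rw [hAΦ]
  exact posDef_add_conjTranspose_mul_mul_iff (posSemidef_blockCentering fun k => (hw k).le)
    (fun x hx => star_dotProduct_blockCentering_mulVec_pos hw hx)
    (exists_blockIndicator_mulVec_eq _) hΦ

open Matrix in
/-- Theorem 2: a parametric block correlation matrix `A ∈ B(p)` (CS diagonal
blocks with parameters `b_k`, constant off-diagonal blocks `c_{k,ℓ}`) is
positive definite iff the block average matrix `φ(A)` (diagonal entries
`α_k = (1+(n_k-1)b_k)/n_k`, off-diagonal entries `c_{k,ℓ}`) is positive
definite. -/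
theorem blockClass_posDef_iff_average (p : ℕ) (n : Fin p → ℕ) (hn : ∀ k, 0 < n k)
    (b : Fin p → ℝ) (hb : ∀ k, -1 < b k ∧ b k < 1) (hb1 : ∀ k, n k = 1 → b k = 0)
    (c : Fin p → Fin p → ℝ) (hcsymm : ∀ k l, c k l = c l k)
    (hc : ∀ k l, k ≠ l → -1 < c k l ∧ c k l < 1)
    (A : Matrix ((k : Fin p) × Fin (n k)) ((k : Fin p) × Fin (n k)) ℝ)
    (hA : ∀ x y : (k : Fin p) × Fin (n k),
      A x y = if x = y then 1 else if x.1 = y.1 then b x.1 else c x.1 y.1) :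
    A.PosDef ↔
      (Matrix.of (fun k l : Fin p =>
        if k = l then (1 + ((n k : ℝ) - 1) * b k) / (n k : ℝ) else c k l)).PosDef :=
  blockClass_posDef_iff_average_general p n hn b hb c hcsymm A hA
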